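/- Let x_1 ∈ ℂ^{L_1} and x_2 ∈ ℂ^{L_2} have nonzero first and last entries, and suppose their z-transforms X_1(z), X_2(z) have no common zeros (are co-prime). If y_1 ∈ ℂ^{L_1}, y_2 ∈ ℂ^{L_2} satisfy y_1 * conj(y_1^-) = x_1 * conj(x_1^-), y_2 * conj(y_2^-) = x_2 * conj(x_2^-), and y_1 * conj(y_2^-) = x_1 * conj(x_2^-), then there exists φ ∈ ℝ such that y_1 = e^{iφ} x_1 and y_2 = e^{iφ} x_2. -/

import Mathlib

open Complex Finset

/-- Zero-padded extension of a finite vector to an ℕ-indexed sequence. -/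
noncomputable def pad {L : ℕ} (x : Fin L → ℂ) : ℕ → ℂ :=
  fun n => if h : n < L then x ⟨n, h⟩ else 0

/-- Aperiodic (linear) convolution of ℕ-indexed sequences. -/
noncomputable def aconv (f g : ℕ → ℂ) : ℕ → ℂ :=
  fun k => ∑ l ∈ Finset.range (k + 1), f l * g (k - l)

/-- Conjugate time-reversal of a vector: (crev x) k = conj (x (L-1-k)). -/
noncomputable def crev {L : ℕ} (x : Fin L → ℂ) : Fin L → ℂ :=
  fun k => star (x k.rev)

/-- Aperiodic autocorrelation a = x * conj(x⁻). -/
noncomputable def acorr {L : ℕ} (x : Fin L → ℂ) : ℕ → ℂ :=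
  aconv (pad x) (pad (crev x))

/-!
Write `X`, `Y` for the z-transforms of `x`, `y` as polynomials in `w = z⁻¹`, and `X*` for the
transform of the conjugate reversal, i.e. the reflected conjugate polynomial. The hypotheses say
`Y₁ Y₁* = X₁ X₁*` and `Y₁ Y₂* = X₁ X₂*`. Cancelling `Y₁` gives `Y₂* X₁* = X₂* Y₁*`, and undoing the
conjugate reflection gives `Y₂ X₁ = X₂ Y₁`. As `X₁` and `X₂` are coprime, `X₁ ∣ Y₁`, and since
`deg Y₁ ≤ L₁ - 1 = deg X₁` this forces `Y₁ = c X₁`, hence `Y₂ = c X₂`; finally `Y₁ Y₁* = X₁ X₁*`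
gives `c c̄ = 1`.
-/

open Polynomial

lemma mul_eq_mul_of_mul_eq_of_mul_eq {R : Type*} [CommMonoidWithZero R] [IsCancelMulZero R]
    {a a' b b' d e : R} (ha : a * a' ≠ 0) (hb : b * b' = a * a') (hd : b * e = a * d) :
    e * a' = d * b' := by
  have hb0 : b ≠ 0 := by
    rintro rfl
    exact ha (by rw [← hb, zero_mul])
  apply mul_left_cancel₀ hb0
  calc b * (e * a') = b * e * a' := (mul_assoc _ _ _).symm
    _ = d * (a * a') := by rw [hd]; ac_rfl
    _ = b * (d * b') := by rw [← hb]; ac_rfl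

lemma Polynomial.exists_eq_C_mul_of_dvd_of_natDegree_le {R : Type*} [CommSemiring R]
    [NoZeroDivisors R] {p q : R[X]} (hp : p ≠ 0) (hpq : p ∣ q)
    (hdeg : q.natDegree ≤ p.natDegree) : ∃ c, q = C c * p := by
  obtain ⟨r, rfl⟩ := hpq
  by_cases hr : r = 0
  · exact ⟨0, by simp [hr]⟩
  · rw [natDegree_mul hp hr] at hdeg
    exact ⟨r.coeff 0, by rw [mul_comm p, ← eq_C_of_natDegree_eq_zero (by omega)]⟩

lemma Complex.exists_exp_eq_of_mul_star_eq_one {c : ℂ} (hc : c * star c = 1) :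
    ∃ φ : ℝ, exp (I * φ) = c := by
  have hnorm : ‖c‖ = 1 := by
    have : normSq c = 1 := by exact_mod_cast (mul_conj c).symm.trans hc
    rwa [normSq_eq_norm_sq, pow_eq_one_iff_of_nonneg (norm_nonneg c) two_ne_zero] at this
  obtain ⟨φ, hφ⟩ := (norm_eq_one_iff c).1 hnorm
  exact ⟨φ, by rw [mul_comm, hφ]⟩

/-- The z-transform `∑ x_k z^{-k}` of `x`, as a polynomial in `w = z⁻¹`. -/
noncomputable def toPoly {L : ℕ} (x : Fin L → ℂ) : ℂ[X] :=
  ∑ k : Fin L, C (x k) * X ^ (k : ℕ)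

section toPoly

variable {L M : ℕ}

lemma pad_val (x : Fin L → ℂ) (i : Fin L) : pad x i = x i := by
  simp [pad]

lemma coeff_toPoly (x : Fin L → ℂ) (n : ℕ) : (toPoly x).coeff n = pad x n := by
  simp only [toPoly, finsetSum_coeff, coeff_C_mul, coeff_X_pow, mul_ite, mul_one, mul_zero]
  by_cases hn : n < L
  · rw [Finset.sum_eq_single ⟨n, hn⟩ (fun i _ hi => if_neg fun h => hi (Fin.ext h.symm))
      (by simp)]
    simp [pad, hn]
  · rw [Finset.sum_eq_zero fun i _ => if_neg (by omega)]
    simp [pad, hn]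

lemma toPoly_injective : Function.Injective (toPoly (L := L)) := by
  intro x y h
  funext i
  simpa [coeff_toPoly, pad_val] using congrArg (coeff · i) h

lemma toPoly_smul (c : ℂ) (x : Fin L → ℂ) : toPoly (c • x) = C c * toPoly x := by
  simp [toPoly, Finset.mul_sum, mul_assoc]

lemma toPoly_ne_zero {x : Fin L → ℂ} {i : Fin L} (hi : x i ≠ 0) : toPoly x ≠ 0 :=
  fun h => hi (by rw [← pad_val x i, ← coeff_toPoly, h, coeff_zero])

lemma natDegree_toPoly_le (x : Fin L → ℂ) : (toPoly x).natDegree ≤ L - 1 :=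
  natDegree_le_iff_coeff_eq_zero.2 fun n hn => by
    rw [coeff_toPoly, pad, dif_neg (by omega)]

lemma natDegree_toPoly (hL : 1 ≤ L) {x : Fin L → ℂ}
    (hx : x ⟨L - 1, Nat.sub_lt hL Nat.one_pos⟩ ≠ 0) : (toPoly x).natDegree = L - 1 :=
  (natDegree_toPoly_le x).antisymm <| le_natDegree_of_ne_zero <| by
    simpa [coeff_toPoly, pad, show L - 1 < L by omega] using hx

lemma eval_inv_toPoly (x : Fin L → ℂ) (z : ℂ) :
    (toPoly x).eval z⁻¹ = ∑ k : Fin L, x k * z ^ (-(k : ℤ)) := by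
  simp [toPoly, eval_finsetSum, zpow_neg, inv_pow]

lemma isCoprime_toPoly (hL : 1 ≤ L) {x : Fin L → ℂ} {y : Fin M → ℂ} (hx : x ⟨0, hL⟩ ≠ 0)
    (h : ¬∃ z : ℂ, z ≠ 0 ∧ (∑ k : Fin L, x k * z ^ (-(k : ℤ))) = 0 ∧
      (∑ k : Fin M, y k * z ^ (-(k : ℤ))) = 0) :
    IsCoprime (toPoly x) (toPoly y) := by
  rw [isCoprime_iff_aeval_ne_zero_of_isAlgClosed (k := ℂ) ℂ]
  intro w
  simp only [coe_aeval_eq_eval]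
  by_cases hw : w = 0
  · left
    rwa [hw, ← coeff_zero_eq_eval_zero, coeff_toPoly, pad, dif_pos (show 0 < L from hL)]
  · rw [← not_and_or]
    rintro ⟨hxw, hyw⟩
    exact h ⟨w⁻¹, inv_ne_zero hw, by rwa [← eval_inv_toPoly, inv_inv],
      by rwa [← eval_inv_toPoly, inv_inv]⟩

lemma aconv_pad_eq_coeff_mul (a : Fin L → ℂ) (b : Fin M → ℂ) (k : ℕ) :
    aconv (pad a) (pad b) k = (toPoly a * toPoly b).coeff k := by
  rw [coeff_mul, Finset.Nat.sum_antidiagonal_eq_sum_range_succ_mk]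
  simp [aconv, coeff_toPoly]

lemma toPoly_mul_eq_of_aconv_eq {a a' : Fin L → ℂ} {b b' : Fin M → ℂ}
    (h : ∀ k, aconv (pad a) (pad b) k = aconv (pad a') (pad b') k) :
    toPoly a * toPoly b = toPoly a' * toPoly b' :=
  ext fun k => by simpa [aconv_pad_eq_coeff_mul] using h k

lemma crev_smul (c : ℂ) (x : Fin L → ℂ) : crev (c • x) = star c • crev x := by
  funext k
  simp [crev]

lemma crev_zero (hL : 1 ≤ L) (x : Fin L → ℂ) :
    crev x ⟨0, hL⟩ = star (x ⟨L - 1, Nat.sub_lt hL Nat.one_pos⟩) := by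
  simp [crev, Fin.rev]

lemma toPoly_crev (x : Fin L → ℂ) :
    toPoly (crev x) = reflect (L - 1) ((toPoly x).map (starRingEnd ℂ)) := by
  ext n
  rw [coeff_toPoly, coeff_reflect, coeff_map, coeff_toPoly]
  by_cases hn : n < L
  · rw [revAt_le (by omega)]
    simp only [pad, crev, dif_pos hn, dif_pos (show L - 1 - n < L by omega)]
    congr 2
    ext
    simp [Fin.rev]
    omega
  · rcases Nat.lt_or_ge (L - 1) n with h | h
    · rw [revAt_eq_self_of_lt h]
      simp [pad, hn]
    · simp [pad, show L = 0 by omega]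

lemma toPoly_crev_mul_toPoly_crev (x : Fin L → ℂ) (y : Fin M → ℂ) :
    toPoly (crev x) * toPoly (crev y) =
      reflect (L - 1 + (M - 1)) ((toPoly x * toPoly y).map (starRingEnd ℂ)) := by
  rw [Polynomial.map_mul, reflect_mul _ _ (natDegree_map_le.trans (natDegree_toPoly_le x))
    (natDegree_map_le.trans (natDegree_toPoly_le y)), toPoly_crev, toPoly_crev]

lemma toPoly_mul_eq_of_crev {x x' : Fin L → ℂ} {y y' : Fin M → ℂ}
    (h : toPoly (crev x) * toPoly (crev y) = toPoly (crev x') * toPoly (crev y')) :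
    toPoly x * toPoly y = toPoly x' * toPoly y' := by
  rw [toPoly_crev_mul_toPoly_crev, toPoly_crev_mul_toPoly_crev] at h
  exact map_injective _ (starRingEnd ℂ).injective <| by
    simpa using congrArg (reflect (L - 1 + (M - 1))) h

lemma mul_star_eq_one_of_toPoly_smul {x : Fin L → ℂ} {c : ℂ}
    (hx : toPoly x * toPoly (crev x) ≠ 0)
    (h : toPoly (c • x) * toPoly (crev (c • x)) = toPoly x * toPoly (crev x)) :
    c * star c = 1 := by
  rw [crev_smul, toPoly_smul, toPoly_smul] at h
  have : C (c * star c) * (toPoly x * toPoly (crev x)) = C 1 * (toPoly x * toPoly (crev x)) := by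
    rw [C_mul, C_1, one_mul]
    linear_combination h
  exact C_injective (mul_right_cancel₀ hx this)

end toPoly

theorem stmt19 {L₁ L₂ : ℕ} (hL₁ : 1 ≤ L₁)
    (x₁ y₁ : Fin L₁ → ℂ) (x₂ y₂ : Fin L₂ → ℂ)
    (hx₁0 : x₁ ⟨0, by omega⟩ ≠ 0) (hx₁l : x₁ ⟨L₁ - 1, by omega⟩ ≠ 0)
    (hcoprime : ¬∃ z : ℂ, z ≠ 0 ∧
      (∑ k : Fin L₁, x₁ k * z ^ (-(k : ℤ))) = 0 ∧
      (∑ k : Fin L₂, x₂ k * z ^ (-(k : ℤ))) = 0)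
    (ha₁ : ∀ k : ℕ, acorr y₁ k = acorr x₁ k)
    (hc : ∀ k : ℕ, aconv (pad y₁) (pad (crev y₂)) k = aconv (pad x₁) (pad (crev x₂)) k) :
    ∃ φ : ℝ, (∀ k, y₁ k = Complex.exp (Complex.I * φ) * x₁ k) ∧
             (∀ k, y₂ k = Complex.exp (Complex.I * φ) * x₂ k) := by
  have hX₁ : toPoly x₁ ≠ 0 := toPoly_ne_zero hx₁0
  have hX₁' : toPoly (crev x₁) ≠ 0 := toPoly_ne_zero (by rwa [crev_zero hL₁, star_ne_zero])
  have hauto := toPoly_mul_eq_of_aconv_eq ha₁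
  have hcross : toPoly y₂ * toPoly x₁ = toPoly x₂ * toPoly y₁ := toPoly_mul_eq_of_crev <|
    mul_eq_mul_of_mul_eq_of_mul_eq (mul_ne_zero hX₁ hX₁') hauto (toPoly_mul_eq_of_aconv_eq hc)
  have hdvd : toPoly x₁ ∣ toPoly y₁ := (isCoprime_toPoly hL₁ hx₁0 hcoprime).dvd_of_dvd_mul_left
    ⟨toPoly y₂, by rw [← hcross, mul_comm]⟩
  obtain ⟨c, hY₁⟩ := exists_eq_C_mul_of_dvd_of_natDegree_le hX₁ hdvd
    (natDegree_toPoly hL₁ hx₁l ▸ natDegree_toPoly_le y₁)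
  have hy₁ : y₁ = c • x₁ := toPoly_injective (by rw [toPoly_smul, hY₁])
  have hy₂ : y₂ = c • x₂ := toPoly_injective <| mul_left_cancel₀ hX₁ <| by
    rw [mul_comm, hcross, hY₁, toPoly_smul]; ring
  obtain ⟨φ, hφ⟩ := Complex.exists_exp_eq_of_mul_star_eq_one <|
    mul_star_eq_one_of_toPoly_smul (mul_ne_zero hX₁ hX₁') (hy₁ ▸ hauto)
  exact ⟨φ, fun k => by simp [hy₁, hφ], fun k => by simp [hy₂, hφ]⟩
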